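/- (Second Proposition of Section 5) In the Section-5 setup below, for all i, j ∈ ℤ one has d̄ d Φ_{i,j} = −(d̄Φ_{i,-1})(d̄Φ_{-1,j}) (an identity of m×m matrices of 2-forms). -/

import Mathlib

/-- A bidifferential calculus: a unital graded associative algebra
`Ω = ⊕_{r≥0} Ω^r` over a field `𝕂`, together with two `𝕂`-linear graded
derivations `d`, `dbar` of degree one satisfying `d² = d̄² = d d̄ + d̄ d = 0`. -/
structure BidiffCalculus (𝕂 : Type) [Field 𝕂] (Ω : Type) [Ring Ω] [Algebra 𝕂 Ω] where
  grade : ℕ → Submodule 𝕂 Ω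
  internal : DirectSum.IsInternal grade
  one_mem : (1 : Ω) ∈ grade 0
  mul_mem : ∀ (r s : ℕ), ∀ a ∈ grade r, ∀ b ∈ grade s, a * b ∈ grade (r + s)
  d : Ω →ₗ[𝕂] Ω
  dbar : Ω →ₗ[𝕂] Ω
  d_grade : ∀ (r : ℕ), ∀ a ∈ grade r, d a ∈ grade (r + 1)
  dbar_grade : ∀ (r : ℕ), ∀ a ∈ grade r, dbar a ∈ grade (r + 1)
  d_leibniz : ∀ (r : ℕ), ∀ a ∈ grade r, ∀ b : Ω,
      d (a * b) = d a * b + ((-1 : ℤ) ^ r) • (a * d b)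
  dbar_leibniz : ∀ (r : ℕ), ∀ a ∈ grade r, ∀ b : Ω,
      dbar (a * b) = dbar a * b + ((-1 : ℤ) ^ r) • (a * dbar b)
  d_d : ∀ a : Ω, d (d a) = 0
  dbar_dbar : ∀ a : Ω, dbar (dbar a) = 0
  d_dbar_anticomm : ∀ a : Ω, d (dbar a) + dbar (d a) = 0

namespace BidiffCalculus

variable {𝕂 : Type} [Field 𝕂] {Ω : Type} [Ring Ω] [Algebra 𝕂 Ω]

/-- Entrywise action of `d` on matrices over `Ω`. -/
def matD (S : BidiffCalculus 𝕂 Ω) {m n : ℕ} (M : Matrix (Fin m) (Fin n) Ω) :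
    Matrix (Fin m) (Fin n) Ω := M.map S.d

/-- Entrywise action of `dbar` on matrices over `Ω`. -/
def matDbar (S : BidiffCalculus 𝕂 Ω) {m n : ℕ} (M : Matrix (Fin m) (Fin n) Ω) :
    Matrix (Fin m) (Fin n) Ω := M.map S.dbar

/-- A matrix has all entries of degree `r`. -/
def MatIn (S : BidiffCalculus 𝕂 Ω) (r : ℕ) {m n : ℕ} (M : Matrix (Fin m) (Fin n) Ω) : Prop :=
  ∀ i j, M i j ∈ S.grade r

end BidiffCalculus

/-- `Φ_{i,j} = θ Δ^i Ω̂^{-1} Γ^j η`, with negative powers given by powers of inverses. -/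
def Phi {R : Type} [Ring R] {m n : ℕ} (θ : Matrix (Fin m) (Fin n) R)
    (η : Matrix (Fin n) (Fin m) R) (Δ Γ W : (Matrix (Fin n) (Fin n) R)ˣ) (i j : ℤ) :
    Matrix (Fin m) (Fin m) R :=
  θ * Units.val (Δ ^ i) * Units.val W⁻¹ * Units.val (Γ ^ j) * η


namespace BidiffCalculus

variable {𝕂 : Type} [Field 𝕂] {Ω : Type} [Ring Ω] [Algebra 𝕂 Ω] (S : BidiffCalculus 𝕂 Ω)

lemma d_one : S.d 1 = 0 := by
  have h := S.d_leibniz 0 1 S.one_mem 1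
  simpa using h

lemma dbar_one : S.dbar 1 = 0 := by
  have h := S.dbar_leibniz 0 1 S.one_mem 1
  simpa using h

variable {m n k : ℕ}

lemma matD_apply (M : Matrix (Fin m) (Fin n) Ω) (i j) : S.matD M i j = S.d (M i j) := rfl
lemma matDbar_apply (M : Matrix (Fin m) (Fin n) Ω) (i j) : S.matDbar M i j = S.dbar (M i j) := rfl

lemma matD_add (M N : Matrix (Fin m) (Fin n) Ω) : S.matD (M + N) = S.matD M + S.matD N := by
  ext i j; simp [matD_apply, Matrix.add_apply]

lemma matDbar_add (M N : Matrix (Fin m) (Fin n) Ω) : S.matDbar (M + N) = S.matDbar M + S.matDbar N := by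
  ext i j; simp [matDbar_apply, Matrix.add_apply]

lemma matD_sub (M N : Matrix (Fin m) (Fin n) Ω) : S.matD (M - N) = S.matD M - S.matD N := by
  ext i j; simp [matD_apply, Matrix.sub_apply]

lemma matDbar_sub (M N : Matrix (Fin m) (Fin n) Ω) : S.matDbar (M - N) = S.matDbar M - S.matDbar N := by
  ext i j; simp [matDbar_apply, Matrix.sub_apply]

lemma matD_one : S.matD (1 : Matrix (Fin n) (Fin n) Ω) = 0 := by
  ext i j
  simp [matD_apply, Matrix.one_apply]
  split <;> simp [S.d_one]

lemma matDbar_one : S.matDbar (1 : Matrix (Fin n) (Fin n) Ω) = 0 := by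
  ext i j
  simp [matDbar_apply, Matrix.one_apply]
  split <;> simp [S.dbar_one]

lemma matIn_mul {M : Matrix (Fin m) (Fin n) Ω} {N : Matrix (Fin n) (Fin k) Ω}
    (hM : S.MatIn 0 M) (hN : S.MatIn 0 N) : S.MatIn 0 (M * N) := by
  intro i j
  rw [Matrix.mul_apply]
  refine Submodule.sum_mem _ (fun l _ => ?_)
  have := S.mul_mem 0 0 _ (hM i l) _ (hN l j)
  simpa using this

lemma matD_mul {M : Matrix (Fin m) (Fin n) Ω} (hM : S.MatIn 0 M) (N : Matrix (Fin n) (Fin k) Ω) :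
    S.matD (M * N) = S.matD M * N + M * S.matD N := by
  ext i j
  simp only [matD_apply, Matrix.add_apply, Matrix.mul_apply, map_sum]
  rw [← Finset.sum_add_distrib]
  refine Finset.sum_congr rfl (fun l _ => ?_)
  have := S.d_leibniz 0 _ (hM i l) (N l j)
  simpa using this

lemma matDbar_mul {M : Matrix (Fin m) (Fin n) Ω} (hM : S.MatIn 0 M) (N : Matrix (Fin n) (Fin k) Ω) :
    S.matDbar (M * N) = S.matDbar M * N + M * S.matDbar N := by
  ext i j
  simp only [matDbar_apply, Matrix.add_apply, Matrix.mul_apply, map_sum]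
  rw [← Finset.sum_add_distrib]
  refine Finset.sum_congr rfl (fun l _ => ?_)
  have := S.dbar_leibniz 0 _ (hM i l) (N l j)
  simpa using this

lemma matD_matD (M : Matrix (Fin m) (Fin n) Ω) : S.matD (S.matD M) = 0 := by
  ext i j; simp [matD_apply, S.d_d]

lemma matDbar_matD (M : Matrix (Fin m) (Fin n) Ω) :
    S.matDbar (S.matD M) = -S.matD (S.matDbar M) := by
  ext i j
  simp only [matDbar_apply, matD_apply, Matrix.neg_apply]
  exact (neg_eq_of_add_eq_zero_right (S.d_dbar_anticomm (M i j))).symm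

end BidiffCalculus

namespace BidiffCalculus

variable {𝕂 : Type} [Field 𝕂] {Ω : Type} [Ring Ω] [Algebra 𝕂 Ω] (S : BidiffCalculus 𝕂 Ω)
variable {m n : ℕ}

lemma matIn_one : S.MatIn 0 (1 : Matrix (Fin n) (Fin n) Ω) := by
  intro i j
  rw [Matrix.one_apply]
  split
  · exact S.one_mem
  · exact (S.grade 0).zero_mem

lemma matD_inv {V V' : Matrix (Fin n) (Fin n) Ω} (h0V' : S.MatIn 0 V')
    (hVV' : V * V' = 1) (hV'V : V' * V = 1) :
    S.matD V' = -(V' * (S.matD V * V')) := by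
  have h0 : S.matD V' * V + V' * S.matD V = 0 := by
    rw [← S.matD_mul h0V', hV'V, S.matD_one]
  calc S.matD V' = S.matD V' * (V * V') := by rw [hVV', Matrix.mul_one]
  _ = (S.matD V' * V) * V' := by rw [Matrix.mul_assoc]
  _ = (-(V' * S.matD V)) * V' := by rw [eq_neg_of_add_eq_zero_left h0]
  _ = -(V' * (S.matD V * V')) := by rw [Matrix.neg_mul, Matrix.mul_assoc]

lemma matDbar_inv {V V' : Matrix (Fin n) (Fin n) Ω} (h0V' : S.MatIn 0 V')
    (hVV' : V * V' = 1) (hV'V : V' * V = 1) :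
    S.matDbar V' = -(V' * (S.matDbar V * V')) := by
  have h0 : S.matDbar V' * V + V' * S.matDbar V = 0 := by
    rw [← S.matDbar_mul h0V', hV'V, S.matDbar_one]
  calc S.matDbar V' = S.matDbar V' * (V * V') := by rw [hVV', Matrix.mul_one]
  _ = (S.matDbar V' * V) * V' := by rw [Matrix.mul_assoc]
  _ = (-(V' * S.matDbar V)) * V' := by rw [eq_neg_of_add_eq_zero_left h0]
  _ = -(V' * (S.matDbar V * V')) := by rw [Matrix.neg_mul, Matrix.mul_assoc]

end BidiffCalculus

namespace BidiffCalculus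

variable {𝕂 : Type} [Field 𝕂] {Ω : Type} [Ring Ω] [Algebra 𝕂 Ω] (S : BidiffCalculus 𝕂 Ω)
variable {m n : ℕ}

section Key

variable (D D' V V' G G' lam kap : Matrix (Fin n) (Fin n) Ω)
variable (p θ : Matrix (Fin m) (Fin n) Ω) (q η : Matrix (Fin n) (Fin m) Ω)

/-- Key algebraic identity C: `Φ_{i,j+1} = Φ_{i+1,j} + Φ_{i,0} Φ_{0,j}`. -/
lemma keyC (hVV' : V * V' = 1) (hV'V : V' * V = 1)
    (hSyl : G * V - V * D = η * θ) :
    p * (V' * (G * q)) = p * (D * (V' * q)) + p * (V' * η) * (θ * (V' * q)) := by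
  have hVV'x : ∀ {k : ℕ} (x : Matrix (Fin n) (Fin k) Ω), V * (V' * x) = x := by
    intro k x; rw [← Matrix.mul_assoc, hVV', Matrix.one_mul]
  have hV'Vx : ∀ {k : ℕ} (x : Matrix (Fin n) (Fin k) Ω), V' * (V * x) = x := by
    intro k x; rw [← Matrix.mul_assoc, hV'V, Matrix.one_mul]
  have hSylx : ∀ {k : ℕ} (x : Matrix (Fin n) (Fin k) Ω),
      η * (θ * x) = G * (V * x) - V * (D * x) := by
    intro k x; rw [← Matrix.mul_assoc, ← Matrix.mul_assoc, ← Matrix.mul_assoc, ← hSyl, Matrix.sub_mul]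
  simp only [Matrix.mul_assoc, hSylx, Matrix.mul_sub, hVV'x, hV'Vx]
  abel

/-- Key identity: `Φ_{0,-1} Φ_{-1,0} = Φ_{-1,0} - Φ_{0,-1}`. -/
lemma keyC' (hVV' : V * V' = 1) (hV'V : V' * V = 1)
    (hG'G : G' * G = 1) (hDD' : D * D' = 1)
    (hSyl : G * V - V * D = η * θ) :
    (θ * (V' * (G' * η))) * (θ * (D' * (V' * η)))
      = θ * (D' * (V' * η)) - θ * (V' * (G' * η)) := by
  have hVV'x : ∀ {k : ℕ} (x : Matrix (Fin n) (Fin k) Ω), V * (V' * x) = x := by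
    intro k x; rw [← Matrix.mul_assoc, hVV', Matrix.one_mul]
  have hV'Vx : ∀ {k : ℕ} (x : Matrix (Fin n) (Fin k) Ω), V' * (V * x) = x := by
    intro k x; rw [← Matrix.mul_assoc, hV'V, Matrix.one_mul]
  have hG'Gx : ∀ {k : ℕ} (x : Matrix (Fin n) (Fin k) Ω), G' * (G * x) = x := by
    intro k x; rw [← Matrix.mul_assoc, hG'G, Matrix.one_mul]
  have hDD'x : ∀ {k : ℕ} (x : Matrix (Fin n) (Fin k) Ω), D * (D' * x) = x := by
    intro k x; rw [← Matrix.mul_assoc, hDD', Matrix.one_mul]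
  have hSylx : ∀ {k : ℕ} (x : Matrix (Fin n) (Fin k) Ω),
      η * (θ * x) = G * (V * x) - V * (D * x) := by
    intro k x; rw [← Matrix.mul_assoc, ← Matrix.mul_assoc, ← Matrix.mul_assoc, ← hSyl, Matrix.sub_mul]
  simp only [Matrix.mul_assoc, hSylx, Matrix.mul_sub, hG'Gx, hDD'x, hVV'x, hV'Vx]

/-- Key identity A: `d̄Φ_{i,j} = dΦ_{i+1,j} + Φ_{i,0} dΦ_{0,j}`. -/
lemma keyA (h0p : S.MatIn 0 p) (h0θ : S.MatIn 0 θ) (h0D : S.MatIn 0 D)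
    (h0V' : S.MatIn 0 V')
    (hVV' : V * V' = 1) (hV'V : V' * V = 1)
    (hSyl : G * V - V * D = η * θ)
    (hdp : S.matDbar p = S.matD p * D + p * lam)
    (hdq : S.matDbar q = G * S.matD q + kap * q)
    (hdV : S.matDbar V = G * S.matD V + kap * V + V * lam - V * S.matD D - η * S.matD θ) :
    S.matDbar (p * (V' * q))
      = S.matD (p * (D * (V' * q))) + p * (V' * η) * S.matD (θ * (V' * q)) := by
  have hVV'x : ∀ {k : ℕ} (x : Matrix (Fin n) (Fin k) Ω), V * (V' * x) = x := by
    intro k x; rw [← Matrix.mul_assoc, hVV', Matrix.one_mul]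
  have hV'Vx : ∀ {k : ℕ} (x : Matrix (Fin n) (Fin k) Ω), V' * (V * x) = x := by
    intro k x; rw [← Matrix.mul_assoc, hV'V, Matrix.one_mul]
  have hSylx : ∀ {k : ℕ} (x : Matrix (Fin n) (Fin k) Ω),
      η * (θ * x) = G * (V * x) - V * (D * x) := by
    intro k x; rw [← Matrix.mul_assoc, ← Matrix.mul_assoc, ← Matrix.mul_assoc, ← hSyl, Matrix.sub_mul]
  have hdbV'0 : S.matDbar V' * V + V' * S.matDbar V = 0 := by
    rw [← S.matDbar_mul h0V', hV'V, S.matDbar_one]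
  have hdbV' : S.matDbar V' = -(V' * (S.matDbar V * V')) := by
    calc S.matDbar V' = S.matDbar V' * (V * V') := by rw [hVV', Matrix.mul_one]
    _ = (S.matDbar V' * V) * V' := by rw [Matrix.mul_assoc]
    _ = (-(V' * S.matDbar V)) * V' := by rw [eq_neg_of_add_eq_zero_left hdbV'0]
    _ = -(V' * (S.matDbar V * V')) := by rw [Matrix.neg_mul, Matrix.mul_assoc]
  have hdV'0 : S.matD V' * V + V' * S.matD V = 0 := by
    rw [← S.matD_mul h0V', hV'V, S.matD_one]
  have hdV'e : S.matD V' = -(V' * (S.matD V * V')) := by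
    calc S.matD V' = S.matD V' * (V * V') := by rw [hVV', Matrix.mul_one]
    _ = (S.matD V' * V) * V' := by rw [Matrix.mul_assoc]
    _ = (-(V' * S.matD V)) * V' := by rw [eq_neg_of_add_eq_zero_left hdV'0]
    _ = -(V' * (S.matD V * V')) := by rw [Matrix.neg_mul, Matrix.mul_assoc]
  rw [S.matDbar_mul h0p, S.matDbar_mul h0V', hdp, hdq, hdbV', hdV,
      S.matD_mul h0p, S.matD_mul h0D, S.matD_mul h0θ, S.matD_mul h0V', hdV'e]
  simp only [Matrix.mul_add, Matrix.add_mul, Matrix.mul_sub, Matrix.sub_mul,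
    Matrix.neg_mul, Matrix.mul_neg, Matrix.mul_assoc, hSylx, hVV'x, hV'Vx]
  abel

end Key

end BidiffCalculus

/-- second Proposition, Section 5:
`d̄ d Φ_{i,j} = −(d̄Φ_{i,-1})(d̄Φ_{-1,j})`. -/
theorem Phi_dbar_d
    {𝕂 : Type} [Field 𝕂] [CharZero 𝕂] {Ω : Type} [Ring Ω] [Algebra 𝕂 Ω]
    (S : BidiffCalculus 𝕂 Ω) {m n : ℕ}
    (Δ Γ W : (Matrix (Fin n) (Fin n) Ω)ˣ)
    (lam kap : Matrix (Fin n) (Fin n) Ω)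
    (θ : Matrix (Fin m) (Fin n) Ω) (η : Matrix (Fin n) (Fin m) Ω)
    (hΔ : S.MatIn 0 (Units.val Δ)) (hΔinv : S.MatIn 0 (Units.val Δ⁻¹))
    (hΓ : S.MatIn 0 (Units.val Γ)) (hΓinv : S.MatIn 0 (Units.val Γ⁻¹))
    (hW : S.MatIn 0 (Units.val W)) (hWinv : S.MatIn 0 (Units.val W⁻¹))
    (hlam : S.MatIn 1 lam) (hkap : S.MatIn 1 kap)
    (hθ : S.MatIn 0 θ) (hη : S.MatIn 0 η)
    (heqΔ : S.matDbar (Units.val Δ) + (lam * Units.val Δ - Units.val Δ * lam)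
        = S.matD (Units.val Δ) * Units.val Δ)
    (heqlam : S.matDbar lam + lam * lam = S.matD lam * Units.val Δ)
    (heqΓ : S.matDbar (Units.val Γ) - (kap * Units.val Γ - Units.val Γ * kap)
        = Units.val Γ * S.matD (Units.val Γ))
    (heqkap : S.matDbar kap - kap * kap = Units.val Γ * S.matD kap)
    (heqθ : S.matDbar θ = S.matD θ * Units.val Δ + θ * lam)
    (heqη : S.matDbar η = Units.val Γ * S.matD η + kap * η)
    (hSyl : Units.val Γ * Units.val W - Units.val W * Units.val Δ = η * θ)
    (heqW : S.matDbar (Units.val W) = S.matD (Units.val W) * Units.val Δ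
        - S.matD (Units.val Γ) * Units.val W + kap * Units.val W + Units.val W * lam
        + S.matD η * θ) :
    ∀ i j : ℤ,
      S.matDbar (S.matD (Phi θ η Δ Γ W i j))
        = -(S.matDbar (Phi θ η Δ Γ W i (-1)) * S.matDbar (Phi θ η Δ Γ W (-1) j)) := by
  -- unit cancellation facts
  have hVV' : Units.val W * Units.val W⁻¹ = 1 := Units.mul_inv W
  have hV'V : Units.val W⁻¹ * Units.val W = 1 := Units.inv_mul W
  have hDD'c : Units.val Δ * Units.val Δ⁻¹ = 1 := Units.mul_inv Δ
  have hD'Dc : Units.val Δ⁻¹ * Units.val Δ = 1 := Units.inv_mul Δ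
  have hGG'c : Units.val Γ * Units.val Γ⁻¹ = 1 := Units.mul_inv Γ
  have hG'Gc : Units.val Γ⁻¹ * Units.val Γ = 1 := Units.inv_mul Γ
  have hDD'x : ∀ {k : ℕ} (x : Matrix (Fin n) (Fin k) Ω),
      Units.val Δ * (Units.val Δ⁻¹ * x) = x := by
    intro k x; rw [← Matrix.mul_assoc, hDD'c, Matrix.one_mul]
  have hD'Dx : ∀ {k : ℕ} (x : Matrix (Fin n) (Fin k) Ω),
      Units.val Δ⁻¹ * (Units.val Δ * x) = x := by
    intro k x; rw [← Matrix.mul_assoc, hD'Dc, Matrix.one_mul]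
  have hGG'x : ∀ {k : ℕ} (x : Matrix (Fin n) (Fin k) Ω),
      Units.val Γ * (Units.val Γ⁻¹ * x) = x := by
    intro k x; rw [← Matrix.mul_assoc, hGG'c, Matrix.one_mul]
  have hG'Gx : ∀ {k : ℕ} (x : Matrix (Fin n) (Fin k) Ω),
      Units.val Γ⁻¹ * (Units.val Γ * x) = x := by
    intro k x; rw [← Matrix.mul_assoc, hG'Gc, Matrix.one_mul]
  -- rearranged basic derivative formulas
  have hFΔ : S.matDbar (Units.val Δ) = S.matD (Units.val Δ) * Units.val Δ
      - lam * Units.val Δ + Units.val Δ * lam := by rw [← heqΔ]; abel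
  have hFΓ : S.matDbar (Units.val Γ) = Units.val Γ * S.matD (Units.val Γ)
      + kap * Units.val Γ - Units.val Γ * kap := by rw [← heqΓ]; abel
  have hFΔ' : S.matDbar (Units.val Δ⁻¹) = S.matD (Units.val Δ⁻¹) * Units.val Δ
      - lam * Units.val Δ⁻¹ + Units.val Δ⁻¹ * lam := by
    rw [S.matDbar_inv hΔinv hDD'c hD'Dc, S.matD_inv hΔinv hDD'c hD'Dc, hFΔ]
    simp only [Matrix.sub_mul, Matrix.add_mul, Matrix.mul_add, Matrix.mul_sub,
      Matrix.neg_mul, Matrix.mul_neg, Matrix.mul_assoc, hDD'c, hD'Dc, hDD'x, hD'Dx,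
      Matrix.mul_one]
    abel
  have hFΓ' : S.matDbar (Units.val Γ⁻¹) = Units.val Γ * S.matD (Units.val Γ⁻¹)
      + kap * Units.val Γ⁻¹ - Units.val Γ⁻¹ * kap := by
    rw [S.matDbar_inv hΓinv hGG'c hG'Gc, S.matD_inv hΓinv hGG'c hG'Gc, hFΓ]
    simp only [Matrix.sub_mul, Matrix.add_mul, Matrix.mul_add, Matrix.mul_sub,
      Matrix.neg_mul, Matrix.mul_neg, Matrix.mul_assoc, hGG'c, hG'Gc, hGG'x, hG'Gx,
      Matrix.mul_one]
    abel
  -- powers of Δ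
  have hDp : ∀ i : ℤ, S.MatIn 0 (Units.val (Δ ^ i)) ∧
      S.matDbar (Units.val (Δ ^ i)) = S.matD (Units.val (Δ ^ i)) * Units.val Δ
        - lam * Units.val (Δ ^ i) + Units.val (Δ ^ i) * lam := by
    intro i
    induction i using Int.induction_on with
    | zero =>
      rw [zpow_zero, Units.val_one]
      refine ⟨S.matIn_one, ?_⟩
      rw [S.matD_one, S.matDbar_one, Matrix.zero_mul, Matrix.mul_one, Matrix.one_mul]
      abel
    | succ i ih =>
      rw [zpow_add_one, Units.val_mul]
      refine ⟨S.matIn_mul ih.1 hΔ, ?_⟩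
      rw [S.matDbar_mul ih.1, S.matD_mul ih.1, ih.2, hFΔ]
      simp only [Matrix.sub_mul, Matrix.add_mul, Matrix.mul_add, Matrix.mul_sub,
        Matrix.mul_assoc]
      abel
    | pred i ih =>
      rw [zpow_sub_one, Units.val_mul]
      refine ⟨S.matIn_mul ih.1 hΔinv, ?_⟩
      rw [S.matDbar_mul ih.1, S.matD_mul ih.1, ih.2, hFΔ']
      simp only [Matrix.sub_mul, Matrix.add_mul, Matrix.mul_add, Matrix.mul_sub,
        Matrix.mul_assoc, hDD'c, hD'Dc, hDD'x, hD'Dx, Matrix.mul_one]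
      abel
  -- powers of Γ
  have hGp : ∀ j : ℤ, S.MatIn 0 (Units.val (Γ ^ j)) ∧
      S.matDbar (Units.val (Γ ^ j)) = Units.val Γ * S.matD (Units.val (Γ ^ j))
        + kap * Units.val (Γ ^ j) - Units.val (Γ ^ j) * kap := by
    intro j
    induction j using Int.induction_on with
    | zero =>
      rw [zpow_zero, Units.val_one]
      refine ⟨S.matIn_one, ?_⟩
      rw [S.matD_one, S.matDbar_one, Matrix.mul_zero, Matrix.mul_one, Matrix.one_mul]
      abel
    | succ j ih =>
      rw [show ((Γ : (Matrix (Fin n) (Fin n) Ω)ˣ) ^ ((j : ℤ) + 1)) = Γ * Γ ^ (j : ℤ) from by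
        rw [add_comm, zpow_add, zpow_one], Units.val_mul]
      refine ⟨S.matIn_mul hΓ ih.1, ?_⟩
      rw [S.matDbar_mul hΓ, S.matD_mul hΓ, ih.2, hFΓ]
      simp only [Matrix.sub_mul, Matrix.add_mul, Matrix.mul_add, Matrix.mul_sub,
        Matrix.mul_assoc]
      abel
    | pred j ih =>
      rw [show ((Γ : (Matrix (Fin n) (Fin n) Ω)ˣ) ^ (-(j : ℤ) - 1)) = Γ⁻¹ * Γ ^ (-(j : ℤ)) from by
        rw [show (-(j : ℤ) - 1) = -1 + -(j : ℤ) from by ring, zpow_add, zpow_neg_one],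
        Units.val_mul]
      refine ⟨S.matIn_mul hΓinv ih.1, ?_⟩
      rw [S.matDbar_mul hΓinv, S.matD_mul hΓinv, ih.2, hFΓ']
      simp only [Matrix.sub_mul, Matrix.add_mul, Matrix.mul_add, Matrix.mul_sub,
        Matrix.mul_assoc, hGG'c, hG'Gc, hGG'x, hG'Gx, Matrix.mul_one]
      abel
  -- derivative of p = θ Δ^i
  have hdP : ∀ i : ℤ, S.matDbar (θ * Units.val (Δ ^ i))
      = S.matD (θ * Units.val (Δ ^ i)) * Units.val Δ + (θ * Units.val (Δ ^ i)) * lam := by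
    intro i
    have hc : Units.val Δ * Units.val (Δ ^ i) = Units.val (Δ ^ i) * Units.val Δ := by
      have := zpow_mul_comm Δ 1 i
      rw [zpow_one] at this
      rw [← Units.val_mul, ← Units.val_mul, this]
    rw [S.matDbar_mul hθ, S.matD_mul hθ, (hDp i).2, heqθ]
    simp only [Matrix.sub_mul, Matrix.add_mul, Matrix.mul_add, Matrix.mul_sub,
      Matrix.mul_assoc, hc]
    abel
  -- derivative of q = Γ^j η
  have hdQ : ∀ j : ℤ, S.matDbar (Units.val (Γ ^ j) * η)
      = Units.val Γ * S.matD (Units.val (Γ ^ j) * η) + kap * (Units.val (Γ ^ j) * η) := by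
    intro j
    have hc : Units.val (Γ ^ j) * Units.val Γ = Units.val Γ * Units.val (Γ ^ j) := by
      have := zpow_mul_comm Γ j 1
      rw [zpow_one] at this
      rw [← Units.val_mul, ← Units.val_mul, this]
    have hcx : ∀ {k : ℕ} (x : Matrix (Fin n) (Fin k) Ω),
        Units.val (Γ ^ j) * (Units.val Γ * x) = Units.val Γ * (Units.val (Γ ^ j) * x) := by
      intro k x; rw [← Matrix.mul_assoc, hc, Matrix.mul_assoc]
    rw [S.matDbar_mul (hGp j).1, S.matD_mul (hGp j).1, (hGp j).2, heqη]
    simp only [Matrix.sub_mul, Matrix.add_mul, Matrix.mul_add, Matrix.mul_sub,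
      Matrix.mul_assoc, hcx]
    abel
  -- differentiated Sylvester identity and the nice form of d̄W
  have hdSyl : S.matD (Units.val Γ) * Units.val W + Units.val Γ * S.matD (Units.val W)
      - (S.matD (Units.val W) * Units.val Δ + Units.val W * S.matD (Units.val Δ))
      = S.matD η * θ + η * S.matD θ := by
    have h := congrArg S.matD hSyl
    rw [S.matD_sub, S.matD_mul hΓ, S.matD_mul hW, S.matD_mul hη] at h
    exact h
  have hdVnice : S.matDbar (Units.val W) = Units.val Γ * S.matD (Units.val W)
      + kap * Units.val W + Units.val W * lam - Units.val W * S.matD (Units.val Δ)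
      - η * S.matD θ := by
    have e1 : S.matD η * θ = S.matD (Units.val Γ) * Units.val W
        + Units.val Γ * S.matD (Units.val W)
        - (S.matD (Units.val W) * Units.val Δ + Units.val W * S.matD (Units.val Δ))
        - η * S.matD θ := eq_sub_of_add_eq hdSyl.symm
    rw [heqW, e1]; abel
  -- identity A
  have A : ∀ i j : ℤ, S.matDbar (Phi θ η Δ Γ W i j)
      = S.matD (Phi θ η Δ Γ W (i + 1) j) + Phi θ η Δ Γ W i 0 * S.matD (Phi θ η Δ Γ W 0 j) := by
    intro i j
    have e0 : Phi θ η Δ Γ W i j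
        = (θ * Units.val (Δ ^ i)) * (Units.val W⁻¹ * (Units.val (Γ ^ j) * η)) := by
      simp only [Phi, Matrix.mul_assoc]
    have e1 : Phi θ η Δ Γ W (i + 1) j
        = (θ * Units.val (Δ ^ i)) * (Units.val Δ * (Units.val W⁻¹ * (Units.val (Γ ^ j) * η))) := by
      simp only [Phi, zpow_add_one, Units.val_mul, Matrix.mul_assoc]
    have e2 : Phi θ η Δ Γ W i 0 = (θ * Units.val (Δ ^ i)) * (Units.val W⁻¹ * η) := by
      simp only [Phi, zpow_zero, Units.val_one, Matrix.mul_one, Matrix.one_mul,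
        Matrix.mul_assoc]
    have e3 : Phi θ η Δ Γ W 0 j = θ * (Units.val W⁻¹ * (Units.val (Γ ^ j) * η)) := by
      simp only [Phi, zpow_zero, Units.val_one, Matrix.mul_one, Matrix.one_mul,
        Matrix.mul_assoc]
    rw [e0, e1, e2, e3]
    exact S.keyA _ _ _ _ _ _ _ _ _ _ (S.matIn_mul hθ (hDp i).1) hθ hΔ hWinv hVV' hV'V hSyl
      (hdP i) (hdQ j) hdVnice
  -- identity C
  have C : ∀ i j : ℤ, Phi θ η Δ Γ W i (j + 1)
      = Phi θ η Δ Γ W (i + 1) j + Phi θ η Δ Γ W i 0 * Phi θ η Δ Γ W 0 j := by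
    intro i j
    have e0 : Phi θ η Δ Γ W i (j + 1)
        = (θ * Units.val (Δ ^ i)) * (Units.val W⁻¹ * (Units.val Γ * (Units.val (Γ ^ j) * η))) := by
      simp only [Phi]
      rw [show ((Γ : (Matrix (Fin n) (Fin n) Ω)ˣ) ^ (j + 1)) = Γ * Γ ^ j from by
        rw [add_comm, zpow_add, zpow_one], Units.val_mul]
      simp only [Matrix.mul_assoc]
    have e1 : Phi θ η Δ Γ W (i + 1) j
        = (θ * Units.val (Δ ^ i)) * (Units.val Δ * (Units.val W⁻¹ * (Units.val (Γ ^ j) * η))) := by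
      simp only [Phi, zpow_add_one, Units.val_mul, Matrix.mul_assoc]
    have e2 : Phi θ η Δ Γ W i 0 = (θ * Units.val (Δ ^ i)) * (Units.val W⁻¹ * η) := by
      simp only [Phi, zpow_zero, Units.val_one, Matrix.mul_one, Matrix.one_mul,
        Matrix.mul_assoc]
    have e3 : Phi θ η Δ Γ W 0 j = θ * (Units.val W⁻¹ * (Units.val (Γ ^ j) * η)) := by
      simp only [Phi, zpow_zero, Units.val_one, Matrix.mul_one, Matrix.one_mul,
        Matrix.mul_assoc]
    rw [e0, e1, e2, e3]
    exact BidiffCalculus.keyC _ _ _ _ _ _ _ _ hVV' hV'V hSyl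
  -- all Φ's have degree-0 entries
  have hPhi0 : ∀ i j : ℤ, S.MatIn 0 (Phi θ η Δ Γ W i j) := by
    intro i j
    exact S.matIn_mul (S.matIn_mul (S.matIn_mul (S.matIn_mul hθ (hDp i).1) hWinv) (hGp j).1) hη
  -- identity B at j = -1
  have B : ∀ i : ℤ, S.matDbar (Phi θ η Δ Γ W i (-1))
      = S.matD (Phi θ η Δ Γ W i 0)
        - S.matD (Phi θ η Δ Γ W i 0) * Phi θ η Δ Γ W 0 (-1) := by
    intro i
    have hC := C i (-1)
    norm_num at hC
    have hdC := congrArg S.matD hC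
    rw [S.matD_add, S.matD_mul (hPhi0 i 0)] at hdC
    have key := eq_sub_of_add_eq hdC.symm
    rw [A i (-1), key]; abel
  -- the quadratic identity Φ_{0,-1} Φ_{-1,0} = Φ_{-1,0} - Φ_{0,-1}
  have hba : Phi θ η Δ Γ W 0 (-1) * Phi θ η Δ Γ W (-1) 0
      = Phi θ η Δ Γ W (-1) 0 - Phi θ η Δ Γ W 0 (-1) := by
    have e_b : Phi θ η Δ Γ W 0 (-1) = θ * (Units.val W⁻¹ * (Units.val Γ⁻¹ * η)) := by
      simp only [Phi, zpow_zero, zpow_neg_one, Units.val_one, Matrix.mul_one,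
        Matrix.one_mul, Matrix.mul_assoc]
    have e_a : Phi θ η Δ Γ W (-1) 0 = θ * (Units.val Δ⁻¹ * (Units.val W⁻¹ * η)) := by
      simp only [Phi, zpow_zero, zpow_neg_one, Units.val_one, Matrix.mul_one,
        Matrix.one_mul, Matrix.mul_assoc]
    rw [e_b, e_a]
    exact BidiffCalculus.keyC' _ _ _ _ _ _ _ _ hVV' hV'V hG'Gc hDD'c hSyl
  -- final assembly
  intro i j
  have hA' := A (-1) j
  norm_num at hA'
  have hbax : ∀ {k : ℕ} (x : Matrix (Fin m) (Fin k) Ω),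
      Phi θ η Δ Γ W 0 (-1) * (Phi θ η Δ Γ W (-1) 0 * x)
        = Phi θ η Δ Γ W (-1) 0 * x - Phi θ η Δ Γ W 0 (-1) * x := by
    intro k x; rw [← Matrix.mul_assoc, hba, Matrix.sub_mul]
  rw [S.matDbar_matD, A i j, S.matD_add, S.matD_mul (hPhi0 i 0), S.matD_matD, S.matD_matD,
    B i, hA']
  simp only [Matrix.mul_zero, add_zero, zero_add, Matrix.sub_mul, Matrix.mul_add,
    Matrix.add_mul, Matrix.mul_sub, Matrix.mul_assoc, hbax]
  abel
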